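/- arXiv:2002.07663 — 4 statements merged into one kernel-verified Lean document; each statement's English description precedes it below -/
import Mathlib

section
/- Let C₁, C₂, M be positive real numbers and let a : ℝ³ → ℝ be continuously differentiable with C₁ ≤ a(x) ≤ C₂ and ω(x)·‖∇a(x)‖ ≤ M for all x ∈ ℝ³. Then for every continuously differentiable function g : ℝ³ → ℝ one has ‖ω⁻¹·(g/a)‖_{L²} + ‖∇(g/a)‖_{L²} ≤ (1/C₁ + M/C₁²)·(‖ω⁻¹·g‖_{L²} + ‖∇g‖_{L²}). In particular, 1/a is a multiplier of the weighted Sobolev space ℋ¹(ℝ³). -/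
open MeasureTheory Real
open scoped ENNReal RealInnerProductSpace

noncomputable section

/-- `ℝ³` as a Euclidean space. -/
abbrev E3 : Type := EuclideanSpace ℝ (Fin 3)

/-- The weight function `ω(x) = (1 + |x|²)^{1/2}`. -/
def ω (x : E3) : ℝ := Real.sqrt (1 + ‖x‖ ^ 2)

/-!
By the quotient rule, `∇(g/a) = a⁻¹ ∇g - (g/a²) ∇a`. The first term and `ω⁻¹ g/a` are bounded
pointwise by `C₁⁻¹` times `|∇g|` and `ω⁻¹|g|`; in the second, the decay `|∇a| ≤ M ω⁻¹` of the
coefficient converts `g` into `ω⁻¹ g`, at the cost of the factor `M/C₁²`. Minkowski's inequality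
then assembles the three bounds.
-/

open InnerProductSpace
open scoped Gradient

section Gradient

variable {F : Type*} [NormedAddCommGroup F] [InnerProductSpace ℝ F] [CompleteSpace F]

theorem HasGradientAt.div {f g : F → ℝ} {f' g' x : F} (hf : HasGradientAt f f' x)
    (hg : HasGradientAt g g' x) (hx : g x ≠ 0) :
    HasGradientAt (fun y => f y / g y) ((g x)⁻¹ • f' - (f x / g x ^ 2) • g') x := by
  rw [hasGradientAt_iff_hasFDerivAt] at *
  refine (hf.mul ((hasDerivAt_inv hx).comp_hasFDerivAt x hg)).congr_fderiv ?_
  ext y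
  simp only [neg_smul, smul_neg, Function.comp_apply, add_apply, neg_apply, smul_apply,
    toDual_apply_apply, smul_eq_mul, map_sub, map_smul, sub_apply]
  ring

theorem gradient_div {f g : F → ℝ} {x : F} (hf : DifferentiableAt ℝ f x)
    (hg : DifferentiableAt ℝ g x) (hx : g x ≠ 0) :
    ∇ (fun y => f y / g y) x = (g x)⁻¹ • ∇ f x - (f x / g x ^ 2) • ∇ g x :=
  (hf.hasGradientAt.div hg.hasGradientAt hx).gradient

theorem ContDiff.continuous_gradient {f : F → ℝ} (hf : ContDiff ℝ 1 f) : Continuous (∇ f) :=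
  (toDual ℝ F).symm.continuous.comp (hf.continuous_fderiv one_ne_zero)

end Gradient

theorem eLpNorm_div_le_of_le {α : Type*} [MeasurableSpace α] {μ : Measure α} {p : ℝ≥0∞}
    {h a : α → ℝ} {C : ℝ} (hC : 0 < C) (ha : ∀ x, C ≤ a x) :
    eLpNorm (fun x => h x / a x) p μ ≤ ENNReal.ofReal C⁻¹ * eLpNorm h p μ := by
  refine eLpNorm_le_mul_eLpNorm_of_ae_le_mul (ae_of_all _ fun x => ?_) p
  calc ‖h x / a x‖ = ‖h x‖ / a x := by
        rw [norm_div, Real.norm_of_nonneg (hC.trans_le (ha x)).le]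
    _ ≤ ‖h x‖ / C := div_le_div_of_nonneg_left (norm_nonneg _) hC (ha x)
    _ = C⁻¹ * ‖h x‖ := div_eq_inv_mul _ _

section WeightedGradient

variable {F : Type*} [NormedAddCommGroup F] [InnerProductSpace ℝ F] [FiniteDimensional ℝ F]
  [MeasurableSpace F] [BorelSpace F] {μ : Measure F} {p : ℝ≥0∞}

theorem eLpNorm_gradient_div_le {a g w : F → ℝ} {C M : ℝ} (hp : 1 ≤ p)
    (ha : ContDiff ℝ 1 a) (hg : ContDiff ℝ 1 g) (hC : 0 < C) (hCa : ∀ x, C ≤ a x)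
    (hw : ∀ x, 0 < w x) (hwa : ∀ x, w x * ‖∇ a x‖ ≤ M) :
    eLpNorm (∇ fun y => g y / a y) p μ
      ≤ ENNReal.ofReal C⁻¹ * eLpNorm (∇ g) p μ
        + ENNReal.ofReal (M / C ^ 2) * eLpNorm (fun x => (w x)⁻¹ * g x) p μ := by
  have ha_pos : ∀ x, 0 < a x := fun x => hC.trans_le (hCa x)
  have ha_ne : ∀ x, a x ≠ 0 := fun x => (ha_pos x).ne'
  have hquot : (∇ fun y => g y / a y) = fun x => (a x)⁻¹ • ∇ g x - (g x / a x ^ 2) • ∇ a x :=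
    funext fun x => gradient_div (hg.differentiable one_ne_zero x)
      (ha.differentiable one_ne_zero x) (ha_ne x)
  have hcont₁ : Continuous fun x => (a x)⁻¹ • ∇ g x :=
    (ha.continuous.inv₀ ha_ne).smul hg.continuous_gradient
  have hcont₂ : Continuous fun x => (g x / a x ^ 2) • ∇ a x :=
    (hg.continuous.div (ha.continuous.pow 2) fun x => pow_ne_zero 2 (ha_ne x)).smul
      ha.continuous_gradient
  rw [hquot]
  refine (eLpNorm_sub_le hcont₁.aestronglyMeasurable hcont₂.aestronglyMeasurable hp).trans
    (add_le_add ?_ ?_)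
  · refine eLpNorm_le_mul_eLpNorm_of_ae_le_mul (ae_of_all _ fun x => ?_) p
    rw [norm_smul, norm_inv, Real.norm_of_nonneg (ha_pos x).le]
    gcongr
    exact hCa x
  · refine eLpNorm_le_mul_eLpNorm_of_ae_le_mul (ae_of_all _ fun x => ?_) p
    have hgrad_le : ‖∇ a x‖ ≤ M / w x := (le_div_iff₀' (hw x)).2 (hwa x)
    calc ‖(g x / a x ^ 2) • ∇ a x‖ = |g x| / a x ^ 2 * ‖∇ a x‖ := by
          rw [norm_smul, norm_div, norm_pow, Real.norm_eq_abs, Real.norm_eq_abs, sq_abs]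
      _ ≤ |g x| / C ^ 2 * (M / w x) := by
          gcongr
          exact hCa x
      _ = M / C ^ 2 * ‖(w x)⁻¹ * g x‖ := by
          rw [norm_mul, norm_inv, Real.norm_of_nonneg (hw x).le, Real.norm_eq_abs]
          ring

end WeightedGradient

theorem statement1_general (C₁ C₂ M : ℝ) (hC₁ : 0 < C₁) (hM : 0 < M)
    (a : E3 → ℝ) (ha : ContDiff ℝ 1 a)
    (hbound : ∀ x, C₁ ≤ a x ∧ a x ≤ C₂)
    (hgrad : ∀ x, ω x * ‖gradient a x‖ ≤ M)
    (g : E3 → ℝ) (hg : ContDiff ℝ 1 g) :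
    eLpNorm (fun x => (ω x)⁻¹ * (g x / a x)) 2 volume
      + eLpNorm (fun x => gradient (fun y => g y / a y) x) 2 volume
    ≤ ENNReal.ofReal (1 / C₁ + M / C₁ ^ 2) *
      (eLpNorm (fun x => (ω x)⁻¹ * g x) 2 volume
        + eLpNorm (fun x => gradient g x) 2 volume) := by
  have hCa : ∀ x, C₁ ≤ a x := fun x => (hbound x).1
  have hω : ∀ x, 0 < ω x := fun x => Real.sqrt_pos.2 (by positivity)
  have hval : eLpNorm (fun x => (ω x)⁻¹ * (g x / a x)) 2 volume
      ≤ ENNReal.ofReal C₁⁻¹ * eLpNorm (fun x => (ω x)⁻¹ * g x) 2 volume := by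
    simp_rw [← mul_div_assoc]
    exact eLpNorm_div_le_of_le hC₁ hCa
  have hgrad' := eLpNorm_gradient_div_le (μ := volume) one_le_two ha hg hC₁ hCa hω hgrad
  rw [one_div, ENNReal.ofReal_add (by positivity) (by positivity)]
  calc _ ≤ ENNReal.ofReal C₁⁻¹ * eLpNorm (fun x => (ω x)⁻¹ * g x) 2 volume
        + (ENNReal.ofReal C₁⁻¹ * eLpNorm (∇ g) 2 volume
          + ENNReal.ofReal (M / C₁ ^ 2) * eLpNorm (fun x => (ω x)⁻¹ * g x) 2 volume) :=
        add_le_add hval hgrad'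
    _ ≤ _ := by
        rw [add_mul, mul_add, mul_add, ← add_assoc]
        gcongr
        exact le_self_add

/-- under the bounds `C₁ ≤ a ≤ C₂` and `ω·‖∇a‖ ≤ M`, the function `1/a` is a
multiplier of the weighted Sobolev space `ℋ¹(ℝ³)`. -/
theorem statement1 (C₁ C₂ M : ℝ) (hC₁ : 0 < C₁) (hC₂ : 0 < C₂) (hM : 0 < M)
    (a : E3 → ℝ) (ha : ContDiff ℝ 1 a)
    (hbound : ∀ x, C₁ ≤ a x ∧ a x ≤ C₂)
    (hgrad : ∀ x, ω x * ‖gradient a x‖ ≤ M)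
    (g : E3 → ℝ) (hg : ContDiff ℝ 1 g) :
    eLpNorm (fun x => (ω x)⁻¹ * (g x / a x)) 2 volume
      + eLpNorm (fun x => gradient (fun y => g y / a y) x) 2 volume
    ≤ ENNReal.ofReal (1 / C₁ + M / C₁ ^ 2) *
      (eLpNorm (fun x => (ω x)⁻¹ * g x) 2 volume
        + eLpNorm (fun x => gradient g x) 2 volume) :=
  statement1_general C₁ C₂ M hC₁ hM a ha hbound hgrad g hg
end
end

section
/- Let a : ℝ³ → ℝ be twice continuously differentiable with a(x) > 0 for all x, and fix y ∈ ℝ³. Then for every x ≠ y, Σᵢ₌₁³ ∂/∂xᵢ ( a(x) · ∂/∂xᵢ ( P_Δ(x−y)/a(x) ) ) = −Σᵢ₌₁³ [ ∂ᵢ(ln a)(x) · ∂P_Δ/∂xᵢ(x−y) + ∂ᵢ∂ᵢ(ln a)(x) · P_Δ(x−y) ]. That is, the parametrix P(x,y) = P_Δ(x−y)/a(x) for the divergence-form operator 𝒜u = Σᵢ∂ᵢ(a ∂ᵢ u) satisfies 𝒜ₓ P(x,y) = R(x,y) away from the diagonal, where R(x,y) = −Σᵢ ∂/∂xᵢ(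 ∂ᵢ(ln a)(x) · P_Δ(x−y) ) is the remainder. -/
open MeasureTheory Real
open scoped ENNReal RealInnerProductSpace

noncomputable section

/-- The partial derivative in the `i`-th coordinate direction. -/
def pderiv3 (i : Fin 3) (f : E3 → ℝ) (x : E3) : ℝ := fderiv ℝ f x (EuclideanSpace.single i 1)

/-- The Laplacian `Δf = Σᵢ ∂²f/∂xᵢ²`. -/
def laplacian3 (f : E3 → ℝ) (x : E3) : ℝ := ∑ i : Fin 3, pderiv3 i (pderiv3 i f) x

/-- The fundamental solution of the Laplace operator in `ℝ³`: `P_Δ(z) = -1/(4π|z|)`. -/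
def PΔ (z : E3) : ℝ := -(1 / (4 * Real.pi * ‖z‖))

/-! With `u = P_Δ(· - y)` and `L = ln a`, the identity `a ∂ᵢ(u/a) = ∂ᵢu - ∂ᵢL · u` (valid where
`a ≠ 0`) and the product rule turn `Σᵢ ∂ᵢ(a ∂ᵢ(u/a))` into `Δu - Σᵢ (∂ᵢL ∂ᵢu + ∂ᵢ∂ᵢL · u)`.
It remains that `Δu = 0` off `y`, i.e. that `‖z‖ ^ (2 - n)` is harmonic on `ℝⁿ ∖ {0}`: along a
unit vector `v` its second derivative is `p ‖z‖ ^ (p - 4) ((p - 2) ⟪z, v⟫² + ‖z‖²)`, which sums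
over an orthonormal basis to `p ‖z‖ ^ (p - 2) (p - 2 + n)`. -/

open Topology

section NormRpow

variable {F : Type*} [NormedAddCommGroup F] [InnerProductSpace ℝ F]

theorem hasFDerivAt_norm_rpow_of_ne_zero (p : ℝ) {z : F} (hz : z ≠ 0) :
    HasFDerivAt (fun w : F => ‖w‖ ^ p) ((p * ‖z‖ ^ (p - 2)) • innerSL ℝ z) z := by
  convert (hasStrictFDerivAt_norm_sq z).hasFDerivAt.rpow_const (p := p / 2) (by simp [hz])
    using 1
  · ext w
    rw [← Real.rpow_natCast_mul (norm_nonneg w)]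
    ring_nf
  · simp_rw [← Real.rpow_natCast_mul (norm_nonneg _), ← Nat.cast_smul_eq_nsmul ℝ, smul_smul]
    ring_nf

theorem fderiv_norm_rpow_apply (p : ℝ) {z : F} (hz : z ≠ 0) (v : F) :
    fderiv ℝ (fun w : F => ‖w‖ ^ p) z v = p * ‖z‖ ^ (p - 2) * ⟪z, v⟫ := by
  simp [(hasFDerivAt_norm_rpow_of_ne_zero p hz).fderiv, mul_assoc]

theorem fderiv_fderiv_norm_rpow_apply (p : ℝ) {z : F} (hz : z ≠ 0) (v : F) :
    fderiv ℝ (fun w => fderiv ℝ (fun w : F => ‖w‖ ^ p) w v) z v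
      = p * ‖z‖ ^ (p - 4) * ((p - 2) * ⟪z, v⟫ ^ 2 + ‖z‖ ^ 2 * ‖v‖ ^ 2) := by
  have hfirst : (fun w => fderiv ℝ (fun w : F => ‖w‖ ^ p) w v)
      =ᶠ[𝓝 z] fun w => p * ‖w‖ ^ (p - 2) * innerSL ℝ v w := by
    filter_upwards [isOpen_ne.mem_nhds hz] with w hw
    rw [fderiv_norm_rpow_apply p hw, innerSL_apply_apply, real_inner_comm]
  have hderiv := ((hasFDerivAt_norm_rpow_of_ne_zero (p - 2) hz).const_mul p).fun_mul
    (innerSL ℝ v).hasFDerivAt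
  have hpow : ‖z‖ ^ (p - 2) = ‖z‖ ^ (p - 4) * ‖z‖ ^ 2 := by
    rw [← Real.rpow_natCast, ← Real.rpow_add (norm_pos_iff.2 hz)]
    ring_nf
  rw [hfirst.fderiv_eq, hderiv.fderiv]
  simp only [hpow, coe_innerSL_apply, add_apply, smul_apply, real_inner_self_eq_norm_sq,
    smul_eq_mul, real_inner_comm v z]
  ring_nf

theorem OrthonormalBasis.sum_fderiv_fderiv_norm_rpow_eq_zero {ι : Type*} [Fintype ι]
    (b : OrthonormalBasis ι ℝ F) {z : F} (hz : z ≠ 0) :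
    ∑ i, fderiv ℝ (fun w => fderiv ℝ (fun w : F => ‖w‖ ^ (2 - Fintype.card ι : ℝ)) w (b i))
      z (b i) = 0 := by
  simp only [fderiv_fderiv_norm_rpow_apply _ hz, b.orthonormal.1, ← Finset.mul_sum,
    Finset.sum_add_distrib, b.sum_sq_inner_left, one_pow, mul_one, Finset.sum_const,
    Finset.card_univ, nsmul_eq_mul]
  ring

end NormRpow

section DivergenceForm

variable {E : Type*} [NormedAddCommGroup E] [NormedSpace ℝ E] {f a : E → ℝ} {x : E}

theorem ContDiffAt.differentiableAt_fderiv_apply (hf : ContDiffAt ℝ 2 f x) (v : E) :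
    DifferentiableAt ℝ (fun z => fderiv ℝ f z v) x :=
  ((hf.fderiv_right (m := 1) (by norm_num)).differentiableAt one_ne_zero).clm_apply
    (differentiableAt_const v)

theorem mul_fderiv_div_apply (hf : DifferentiableAt ℝ f x) (ha : DifferentiableAt ℝ a x)
    (hax : a x ≠ 0) (v : E) :
    a x * fderiv ℝ (fun w => f w / a w) x v
      = fderiv ℝ f x v - fderiv ℝ (fun w => Real.log (a w)) x v * f x := by
  have hinv : HasFDerivAt (fun w => (a w)⁻¹) (-(a x ^ 2)⁻¹ • fderiv ℝ a x) x :=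
    (hasDerivAt_inv hax).comp_hasFDerivAt x ha.hasFDerivAt
  simp only [div_eq_mul_inv]
  rw [(hf.hasFDerivAt.fun_mul hinv).fderiv, (ha.hasFDerivAt.log hax).fderiv]
  simp only [add_apply, smul_apply, smul_eq_mul]
  field_simp
  ring

theorem fderiv_mul_fderiv_div_apply (hf : ContDiffAt ℝ 2 f x) (ha : ContDiffAt ℝ 2 a x)
    (hax : a x ≠ 0) (v : E) :
    fderiv ℝ (fun z => a z * fderiv ℝ (fun w => f w / a w) z v) x v
      = fderiv ℝ (fun z => fderiv ℝ f z v) x v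
        - (fderiv ℝ (fun w => Real.log (a w)) x v * fderiv ℝ f x v
          + fderiv ℝ (fun z => fderiv ℝ (fun w => Real.log (a w)) z v) x v * f x) := by
  have hL : ContDiffAt ℝ 2 (fun w => Real.log (a w)) x := ha.log hax
  have hnear : (fun z => a z * fderiv ℝ (fun w => f w / a w) z v)
      =ᶠ[𝓝 x] fun z => fderiv ℝ f z v - fderiv ℝ (fun w => Real.log (a w)) z v * f z := by
    filter_upwards [hf.eventually (by simp), ha.eventually (by simp),
      ha.continuousAt.eventually_ne hax] with z hfz haz hanz
    exact mul_fderiv_div_apply (hfz.differentiableAt two_ne_zero)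
      (haz.differentiableAt two_ne_zero) hanz v
  rw [hnear.fderiv_eq, fderiv_fun_sub (hf.differentiableAt_fderiv_apply v)
    ((hL.differentiableAt_fderiv_apply v).fun_mul (hf.differentiableAt two_ne_zero)),
    fderiv_fun_mul (hL.differentiableAt_fderiv_apply v) (hf.differentiableAt two_ne_zero)]
  simp only [sub_apply, add_apply, smul_apply, smul_eq_mul]
  ring

end DivergenceForm

section Euclidean3

theorem pderiv3_const_smul (i : Fin 3) (c : ℝ) (f : E3 → ℝ) :
    pderiv3 i (c • f) = c • pderiv3 i f := by
  ext x
  simp [pderiv3, fderiv_const_smul_field]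

theorem laplacian3_const_smul (c : ℝ) (f : E3 → ℝ) :
    laplacian3 (c • f) = c • laplacian3 f := by
  ext x
  simp [laplacian3, pderiv3_const_smul, Finset.mul_sum]

theorem pderiv3_comp_sub (i : Fin 3) (f : E3 → ℝ) (y : E3) :
    pderiv3 i (fun w => f (w - y)) = fun w => pderiv3 i f (w - y) := by
  ext x
  simp [pderiv3, fderiv_comp_sub]

theorem laplacian3_comp_sub (f : E3 → ℝ) (y x : E3) :
    laplacian3 (fun w => f (w - y)) x = laplacian3 f (x - y) := by
  simp [laplacian3, pderiv3_comp_sub]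

-- A global identity: at `z = 0` both sides are `0`, since `1 / 0 = 0` and `0 ^ (-1 : ℝ) = 0`.
theorem PΔ_eq_smul_norm_rpow : PΔ = (-(4 * π)⁻¹) • fun z : E3 => ‖z‖ ^ (-1 : ℝ) := by
  ext z
  rw [PΔ, Pi.smul_apply, smul_eq_mul, Real.rpow_neg_one]
  ring

theorem contDiffAt_PΔ {z : E3} (hz : z ≠ 0) : ContDiffAt ℝ 2 PΔ z := by
  rw [PΔ_eq_smul_norm_rpow]
  exact contDiffAt_const.smul ((contDiffAt_norm ℝ hz).rpow_const_of_ne (norm_ne_zero_iff.2 hz))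

theorem laplacian3_PΔ {z : E3} (hz : z ≠ 0) : laplacian3 PΔ z = 0 := by
  have h := (EuclideanSpace.basisFun (Fin 3) ℝ).sum_fderiv_fderiv_norm_rpow_eq_zero hz
  norm_num at h
  rw [PΔ_eq_smul_norm_rpow, laplacian3_const_smul]
  unfold laplacian3 pderiv3
  rw [Pi.smul_apply, h, smul_zero]

end Euclidean3

/-- away from the diagonal, the parametrix `P(x,y) = P_Δ(x-y)/a(x)` for the
divergence-form operator `𝒜u = Σᵢ∂ᵢ(a∂ᵢu)` satisfies `𝒜ₓP(x,y) = R(x,y)`, where `R` is the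
remainder `R(x,y) = -Σᵢ ∂ᵢ(∂ᵢ(ln a)(x)·P_Δ(x-y))` expanded by the product rule. -/
theorem statement3 (a : E3 → ℝ) (ha : ContDiff ℝ 2 a) (hpos : ∀ x, 0 < a x) (y : E3) :
    ∀ x : E3, x ≠ y →
      ∑ i : Fin 3, pderiv3 i (fun z => a z * pderiv3 i (fun w => PΔ (w - y) / a w) z) x
      = -∑ i : Fin 3,
          (pderiv3 i (fun w => Real.log (a w)) x * pderiv3 i (fun w => PΔ (w - y)) x
            + pderiv3 i (pderiv3 i (fun w => Real.log (a w))) x * PΔ (x - y)) := by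
  intro x hx
  have hu : ContDiffAt ℝ 2 (fun w => PΔ (w - y)) x :=
    (contDiffAt_PΔ (sub_ne_zero.2 hx)).comp x (g := PΔ) (contDiffAt_id.sub contDiffAt_const)
  have hharmonic : laplacian3 (fun w => PΔ (w - y)) x = 0 := by
    rw [laplacian3_comp_sub, laplacian3_PΔ (sub_ne_zero.2 hx)]
  unfold laplacian3 at hharmonic
  unfold pderiv3 at *
  rw [Finset.sum_congr rfl fun i _ => fderiv_mul_fderiv_div_apply hu ha.contDiffAt (hpos x).ne' _,
    Finset.sum_sub_distrib, hharmonic, zero_sub]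
end
end

section
/- Let a : ℝ³ → ℝ be twice continuously differentiable and suppose there are positive constants C₁, M₁, M₂ with a(x) ≥ C₁, ‖∇a(x)‖ ≤ M₁ and |∂ᵢ∂ⱼa(x)| ≤ M₂ for all x ∈ ℝ³ and all i, j ∈ {1,2,3}. Define the remainder R(x,y) = −Σᵢ₌₁³ [ ∂ᵢ(ln a)(x) · ∂P_Δ/∂xᵢ(x−y) + ∂ᵢ∂ᵢ(ln a)(x) · P_Δ(x−y) ]. Then there exists a constant C > 0 (one may take C = (1/(4π))·(M₁/C₁ + 3·(M₂/C₁ + M₁²/C₁²))) such that |R(x,y)| ≤ C·|x−y|⁻² whenever 0 < |x−y| ≤ 1. That is, the remainder is weakly singular: R(x,y) = O(|x−y|⁻²). -/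
open MeasureTheory Real
open scoped ENNReal RealInnerProductSpace

noncomputable section

/-!
With `ℓ = log a`, the first half of the sum defining `R` is `⟪∇ℓ(x), ∇ₓP_Δ(x - y)⟫`, which
Cauchy–Schwarz bounds by `(M₁ / C₁) · 1 / (4π|x - y|²)`. The second half is
`Δℓ(x) · P_Δ(x - y)`, where `∂ᵢ∂ᵢℓ = ∂ᵢ∂ᵢa / a - (∂ᵢa / a)²` is bounded by `M₂ / C₁ + M₁² / C₁²`,
and `|P_Δ(z)| = 1 / (4π|z|) ≤ 1 / (4π|z|²)` once `|z| ≤ 1`.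
-/

section InnerProductSpace

variable {F : Type*} [NormedAddCommGroup F] [InnerProductSpace ℝ F]

theorem norm_gradient_eq_norm_fderiv [CompleteSpace F] (f : F → ℝ) (x : F) :
    ‖gradient f x‖ = ‖fderiv ℝ f x‖ :=
  (InnerProductSpace.toDual ℝ F).symm.norm_map _

theorem norm_gradient_log [CompleteSpace F] {a : F → ℝ} {x : F} (ha : DifferentiableAt ℝ a x)
    (hx : a x ≠ 0) : ‖gradient (fun w => Real.log (a w)) x‖ = ‖gradient a x‖ / |a x| := by
  rw [norm_gradient_eq_norm_fderiv, norm_gradient_eq_norm_fderiv,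
    (ha.hasFDerivAt.log hx).fderiv, norm_smul, norm_inv, Real.norm_eq_abs, inv_mul_eq_div]

theorem hasFDerivAt_inv_norm {z : F} (hz : z ≠ 0) :
    HasFDerivAt (fun w : F => ‖w‖⁻¹) (-(‖z‖ ^ 3)⁻¹ • innerSL ℝ z) z := by
  have hz' : 0 < ‖z‖ := norm_pos_iff.mpr hz
  have hnorm : HasFDerivAt (fun w : F => ‖w‖) ((1 / (2 * √(‖z‖ ^ 2))) • (2 • innerSL ℝ z)) z := by
    simpa only [Real.sqrt_sq (norm_nonneg _)] using
      (hasStrictFDerivAt_norm_sq z).hasFDerivAt.sqrt (by positivity)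
  refine ((hasDerivAt_inv hz'.ne').comp_hasFDerivAt z hnorm).congr_fderiv ?_
  ext v
  simp only [Real.sqrt_sq hz'.le, neg_smul, neg_apply, smul_apply, coe_innerSL_apply,
    nsmul_eq_mul, Nat.cast_ofNat, smul_eq_mul, neg_inj]
  field_simp

end InnerProductSpace

theorem pderiv3_eq_inner_gradient (i : Fin 3) (f : E3 → ℝ) (x : E3) :
    pderiv3 i f x = ⟪gradient f x, EuclideanSpace.single i 1⟫ :=
  InnerProductSpace.toDual_symm_apply.symm

theorem sum_pderiv3_mul_pderiv3 (f g : E3 → ℝ) (x : E3) :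
    ∑ i, pderiv3 i f x * pderiv3 i g x = ⟪gradient f x, gradient g x⟫ := by
  rw [← (EuclideanSpace.basisFun (Fin 3) ℝ).sum_inner_mul_inner]
  refine Finset.sum_congr rfl fun i _ => ?_
  rw [EuclideanSpace.basisFun_apply, pderiv3_eq_inner_gradient, pderiv3_eq_inner_gradient,
    real_inner_comm (gradient g x)]

theorem abs_pderiv3_le_norm_gradient (i : Fin 3) (f : E3 → ℝ) (x : E3) :
    |pderiv3 i f x| ≤ ‖gradient f x‖ := by
  simpa [pderiv3_eq_inner_gradient] using
    abs_real_inner_le_norm (gradient f x) (EuclideanSpace.single i (1 : ℝ))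

theorem norm_gradient_PΔ_sub {x y : E3} (hxy : x ≠ y) :
    ‖gradient (fun w => PΔ (w - y)) x‖ = 1 / (4 * π * ‖x - y‖ ^ 2) := by
  have hz : x - y ≠ 0 := sub_ne_zero.mpr hxy
  have hP : HasFDerivAt (fun w => PΔ (w - y))
      ((4 * π)⁻¹ • (‖x - y‖ ^ 3)⁻¹ • innerSL ℝ (x - y)) x := by
    have hfun : (fun w => PΔ (w - y)) = fun w => -(4 * π)⁻¹ * ‖w - y‖⁻¹ := by
      funext w
      rw [PΔ, one_div, mul_inv, neg_mul]
    rw [hfun]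
    refine (((hasFDerivAt_inv_norm hz).comp x (hasFDerivAt_sub_const y)).const_mul _).congr_fderiv
      ?_
    ext v
    simp
  have hr : 0 < ‖x - y‖ := norm_pos_iff.mpr hz
  rw [norm_gradient_eq_norm_fderiv, hP.fderiv, norm_smul, norm_smul, innerSL_apply_norm,
    norm_inv, norm_inv, Real.norm_of_nonneg (by positivity), Real.norm_of_nonneg (by positivity)]
  field_simp

theorem abs_PΔ_le {z : E3} (hz : 0 < ‖z‖) (hz1 : ‖z‖ ≤ 1) :
    |PΔ z| ≤ 1 / (4 * π * ‖z‖ ^ 2) := by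
  rw [PΔ, abs_neg, abs_of_pos (by positivity)]
  gcongr
  nlinarith

theorem pderiv3_log {a : E3 → ℝ} {x : E3} (ha : DifferentiableAt ℝ a x) (hx : a x ≠ 0)
    (i : Fin 3) : pderiv3 i (fun w => Real.log (a w)) x = pderiv3 i a x / a x := by
  rw [pderiv3, (ha.hasFDerivAt.log hx).fderiv, smul_apply, smul_eq_mul, inv_mul_eq_div, pderiv3]

theorem pderiv3_div {f g : E3 → ℝ} {x : E3} (hf : DifferentiableAt ℝ f x)
    (hg : DifferentiableAt ℝ g x) (hx : g x ≠ 0) (i : Fin 3) :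
    pderiv3 i (fun w => f w / g w) x
      = (pderiv3 i f x * g x - f x * pderiv3 i g x) / g x ^ 2 := by
  have h : HasFDerivAt (fun w => f w * (g w)⁻¹)
      (f x • (-(g x ^ 2)⁻¹ • fderiv ℝ g x) + (g x)⁻¹ • fderiv ℝ f x) x :=
    hf.hasFDerivAt.mul ((hasDerivAt_inv hx).comp_hasFDerivAt x hg.hasFDerivAt)
  simp only [div_eq_mul_inv]
  rw [pderiv3, h.fderiv, pderiv3, pderiv3]
  simp only [add_apply, smul_apply, smul_eq_mul]
  field_simp
  ring

theorem pderiv3_pderiv3_log {a : E3 → ℝ} (ha : ContDiff ℝ 2 a) (hne : ∀ x, a x ≠ 0)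
    (i : Fin 3) (x : E3) :
    pderiv3 i (pderiv3 i (fun w => Real.log (a w))) x
      = pderiv3 i (pderiv3 i a) x / a x - (pderiv3 i a x / a x) ^ 2 := by
  have hda : Differentiable ℝ a := ha.differentiable two_ne_zero
  have hdpa : Differentiable ℝ (pderiv3 i a) :=
    ((ha.fderiv_right (m := 1) le_rfl).clm_apply contDiff_const).differentiable one_ne_zero
  have hlog : pderiv3 i (fun w => Real.log (a w)) = fun w => pderiv3 i a w / a w :=
    funext fun w => pderiv3_log (hda w) (hne w) i
  rw [hlog, pderiv3_div (hdpa x) (hda x) (hne x)]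
  field_simp

section Bounds

variable {C₁ M₁ M₂ : ℝ} {a : E3 → ℝ} {x : E3}

theorem norm_gradient_log_le (hC₁ : 0 < C₁) (ha : DifferentiableAt ℝ a x) (hlow : C₁ ≤ a x)
    (hgrad : ‖gradient a x‖ ≤ M₁) : ‖gradient (fun w => Real.log (a w)) x‖ ≤ M₁ / C₁ := by
  have hax : 0 < a x := hC₁.trans_le hlow
  rw [norm_gradient_log ha hax.ne', abs_of_pos hax]
  exact div_le_div₀ ((norm_nonneg _).trans hgrad) hgrad hC₁ hlow

theorem abs_pderiv3_pderiv3_log_le (hC₁ : 0 < C₁) (ha : ContDiff ℝ 2 a) (hlow : ∀ x, C₁ ≤ a x)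
    (i : Fin 3) (hgrad : ‖gradient a x‖ ≤ M₁) (hhess : |pderiv3 i (pderiv3 i a) x| ≤ M₂) :
    |pderiv3 i (pderiv3 i (fun w => Real.log (a w))) x| ≤ M₂ / C₁ + M₁ ^ 2 / C₁ ^ 2 := by
  have hpos : ∀ x, 0 < a x := fun x => hC₁.trans_le (hlow x)
  have hpa : |pderiv3 i a x| ≤ M₁ := (abs_pderiv3_le_norm_gradient i a x).trans hgrad
  rw [pderiv3_pderiv3_log ha (fun x => (hpos x).ne') i x]
  calc |pderiv3 i (pderiv3 i a) x / a x - (pderiv3 i a x / a x) ^ 2|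
      ≤ |pderiv3 i (pderiv3 i a) x| / a x + (|pderiv3 i a x| / a x) ^ 2 := by
        refine (abs_sub _ _).trans_eq ?_
        rw [abs_div, abs_pow, abs_div, abs_of_pos (hpos x)]
    _ ≤ M₂ / C₁ + (M₁ / C₁) ^ 2 := by
        have hM₂ : 0 ≤ M₂ := (abs_nonneg _).trans hhess
        have hM₁ : 0 ≤ M₁ := (abs_nonneg _).trans hpa
        refine add_le_add (div_le_div₀ hM₂ hhess hC₁ (hlow x)) (pow_le_pow_left₀
          (div_nonneg (abs_nonneg _) (hpos x).le) (div_le_div₀ hM₁ hpa hC₁ (hlow x)) 2)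
    _ = M₂ / C₁ + M₁ ^ 2 / C₁ ^ 2 := by rw [div_pow]

end Bounds

/-- the remainder `R(x,y)` is weakly singular, `R(x,y) = O(|x-y|⁻²)`;
one may take `C = (1/(4π))·(M₁/C₁ + 3·(M₂/C₁ + M₁²/C₁²))`. -/
theorem statement4 (C₁ M₁ M₂ : ℝ) (hC₁ : 0 < C₁) (hM₁ : 0 < M₁) (hM₂ : 0 < M₂)
    (a : E3 → ℝ) (ha : ContDiff ℝ 2 a)
    (hlow : ∀ x, C₁ ≤ a x)
    (hgrad : ∀ x, ‖gradient a x‖ ≤ M₁)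
    (hhess : ∀ x, ∀ i j : Fin 3, |pderiv3 i (pderiv3 j a) x| ≤ M₂)
    (R : E3 → E3 → ℝ)
    (hR : ∀ x y, R x y = -∑ i : Fin 3,
        (pderiv3 i (fun w => Real.log (a w)) x * pderiv3 i (fun w => PΔ (w - y)) x
          + pderiv3 i (pderiv3 i (fun w => Real.log (a w))) x * PΔ (x - y))) :
    ∃ C > 0, ∀ x y : E3, 0 < ‖x - y‖ → ‖x - y‖ ≤ 1 → |R x y| ≤ C / ‖x - y‖ ^ 2 := by
  refine ⟨1 / (4 * π) * (M₁ / C₁ + 3 * (M₂ / C₁ + M₁ ^ 2 / C₁ ^ 2)), by positivity, ?_⟩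
  intro x y hr hr1
  set L : E3 → ℝ := fun w => Real.log (a w)
  have hxy : x ≠ y := sub_ne_zero.mp (norm_pos_iff.mp hr)
  have hsplit : R x y = -(∑ i, pderiv3 i L x * pderiv3 i (fun w => PΔ (w - y)) x
      + (∑ i, pderiv3 i (pderiv3 i L) x) * PΔ (x - y)) := by
    rw [hR, Finset.sum_add_distrib, Finset.sum_mul]
  have hfirst : |∑ i, pderiv3 i L x * pderiv3 i (fun w => PΔ (w - y)) x|
      ≤ M₁ / C₁ * (1 / (4 * π * ‖x - y‖ ^ 2)) := by
    rw [sum_pderiv3_mul_pderiv3, ← norm_gradient_PΔ_sub hxy]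
    exact (abs_real_inner_le_norm _ _).trans <| by
      gcongr
      exact norm_gradient_log_le hC₁ (ha.differentiable two_ne_zero x) (hlow x) (hgrad x)
  have hsecond : |∑ i, pderiv3 i (pderiv3 i L) x| ≤ 3 * (M₂ / C₁ + M₁ ^ 2 / C₁ ^ 2) := by
    refine (Finset.abs_sum_le_sum_abs _ _).trans ?_
    refine (Finset.sum_le_sum fun i _ =>
      abs_pderiv3_pderiv3_log_le hC₁ ha hlow i (hgrad x) (hhess x i i)).trans_eq ?_
    rw [Finset.sum_const, Finset.card_univ, Fintype.card_fin, nsmul_eq_mul, Nat.cast_ofNat]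
  calc |R x y|
      ≤ |∑ i, pderiv3 i L x * pderiv3 i (fun w => PΔ (w - y)) x|
        + |∑ i, pderiv3 i (pderiv3 i L) x| * |PΔ (x - y)| := by
        rw [hsplit, abs_neg, ← abs_mul]
        exact abs_add_le _ _
    _ ≤ M₁ / C₁ * (1 / (4 * π * ‖x - y‖ ^ 2))
        + 3 * (M₂ / C₁ + M₁ ^ 2 / C₁ ^ 2) * (1 / (4 * π * ‖x - y‖ ^ 2)) := by
        gcongr
        exact abs_PΔ_le hr hr1
    _ = _ := by field_simp
end
end

section
/- For every continuously differentiable function u : ℝ³ → ℝ with compact support, ∫_{ℝ³} u(x)²/(1 + |x|²) dx ≤ 4 ∫_{ℝ³} ‖∇u(x)‖² dx. Consequently, on compactly supported C¹ functions the seminorm |u| = ‖∇u‖_{L²} is equivalent to the weighted norm ( ‖ω⁻¹·u‖_{L²}² + ‖∇u‖_{L²}² )^{1/2}: the latter is at most √5 times the former. -/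
open MeasureTheory Real
open scoped ENNReal

noncomputable section

/-! With `V x = (1 + ‖x‖²)⁻¹ • x` one computes `div V = n / (1 + ‖x‖²) - 2‖x‖² / (1 + ‖x‖²)²`,
which is at least `(n - 2) / (1 + ‖x‖²)`. Integrating `u²` against `div V` by parts gives
`(n - 2) ∫ u² / (1 + ‖x‖²) ≤ -2 ∫ u ⟪∇u, x⟫ / (1 + ‖x‖²)`, and since
`‖x‖² / (1 + ‖x‖²)² ≤ 1 / (1 + ‖x‖²)`, AM-GM bounds the right-hand side by half of the
left-hand side plus `2 / (n - 2) ∫ ‖∇u‖²`, so `(n - 2)² ∫ u² / (1 + ‖x‖²) ≤ 4 ∫ ‖∇u‖²`. -/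

open Module
open scoped InnerProductSpace

section Hardy

variable {E : Type*} [NormedAddCommGroup E] [InnerProductSpace ℝ E]

def divergence (V : E → E) (x : E) : ℝ := LinearMap.trace ℝ E (fderiv ℝ V x)

lemma divergence_eq_sum_inner {ι : Type*} [Fintype ι] (b : OrthonormalBasis ι ℝ E)
    (V : E → E) (x : E) : divergence V x = ∑ i, ⟪b i, fderiv ℝ V x (b i)⟫_ℝ :=
  LinearMap.trace_eq_sum_inner _ b

lemma hasFDerivAt_inv_one_add_norm_sq_smul_self (x : E) :
    HasFDerivAt (fun y : E ↦ (1 + ‖y‖ ^ 2)⁻¹ • y)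
      ((1 + ‖x‖ ^ 2)⁻¹ • ContinuousLinearMap.id ℝ E
        - (2 / (1 + ‖x‖ ^ 2) ^ 2) • (innerSL ℝ x).smulRight x) x := by
  have hq : HasFDerivAt (fun y : E ↦ 1 + ‖y‖ ^ 2) (2 • innerSL ℝ x) x :=
    ((hasFDerivAt_id x).norm_sq).const_add 1 |>.congr_fderiv (by ext; simp)
  refine (((hasDerivAt_inv (by positivity : (1 + ‖x‖ ^ 2) ≠ 0)).comp_hasFDerivAt x hq).smul
    (hasFDerivAt_id x)).congr_fderiv ?_
  ext v
  simp only [Function.comp_apply, neg_smul, id_eq, add_apply, smul_apply,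
    ContinuousLinearMap.id_apply, ContinuousLinearMap.smulRight_apply, neg_apply,
    coe_innerSL_apply, nsmul_eq_mul, Nat.cast_ofNat, smul_eq_mul, sub_apply]
  module

lemma abs_mul_two_mul_apply_div_le (m a : ℝ) (L : E →L[ℝ] ℝ) (x : E) :
    |m * (2 * a * L x / (1 + ‖x‖ ^ 2))| ≤ m ^ 2 / 2 * (a ^ 2 / (1 + ‖x‖ ^ 2)) + 2 * ‖L‖ ^ 2 := by
  have hq : 0 < 1 + ‖x‖ ^ 2 := by positivity
  set t := |m| * |a| * ‖x‖ / (1 + ‖x‖ ^ 2)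
  have hL : |L x| ≤ ‖L‖ * ‖x‖ := by simpa using L.le_opNorm x
  have ht : t ^ 2 ≤ m ^ 2 * (a ^ 2 / (1 + ‖x‖ ^ 2)) := by
    have hx : ‖x‖ ^ 2 / (1 + ‖x‖ ^ 2) ^ 2 ≤ 1 / (1 + ‖x‖ ^ 2) := by
      rw [div_le_div_iff₀ (by positivity) hq]
      nlinarith
    calc t ^ 2 = m ^ 2 * a ^ 2 * (‖x‖ ^ 2 / (1 + ‖x‖ ^ 2) ^ 2) := by
          simp only [t, div_pow, mul_pow, sq_abs]; ring
      _ ≤ m ^ 2 * a ^ 2 * (1 / (1 + ‖x‖ ^ 2)) := by gcongr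
      _ = m ^ 2 * (a ^ 2 / (1 + ‖x‖ ^ 2)) := by ring
  calc |m * (2 * a * L x / (1 + ‖x‖ ^ 2))| = 2 * (|m| * |a| / (1 + ‖x‖ ^ 2)) * |L x| := by
        rw [abs_mul, abs_div, abs_mul, abs_mul, abs_of_pos hq, abs_two]; ring
    _ ≤ 2 * (|m| * |a| / (1 + ‖x‖ ^ 2)) * (‖L‖ * ‖x‖) := by gcongr
    _ = 2 * t * ‖L‖ := by ring
    _ ≤ t ^ 2 / 2 + 2 * ‖L‖ ^ 2 := by nlinarith [sq_nonneg (t - 2 * ‖L‖)]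
    _ ≤ m ^ 2 / 2 * (a ^ 2 / (1 + ‖x‖ ^ 2)) + 2 * ‖L‖ ^ 2 := by linarith

variable [FiniteDimensional ℝ E]

lemma ContDiff.continuous_divergence {V : E → E} (hV : ContDiff ℝ 1 V) :
    Continuous (divergence V) :=
  ((LinearMap.trace ℝ E).comp (ContinuousLinearMap.coeLM ℝ)).continuous_of_finiteDimensional.comp
    (hV.continuous_fderiv one_ne_zero)

lemma divergence_inv_one_add_norm_sq_smul_self (x : E) :
    divergence (fun y : E ↦ (1 + ‖y‖ ^ 2)⁻¹ • y) x
      = finrank ℝ E / (1 + ‖x‖ ^ 2) - 2 * ‖x‖ ^ 2 / (1 + ‖x‖ ^ 2) ^ 2 := by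
  rw [divergence, (hasFDerivAt_inv_one_add_norm_sq_smul_self x).fderiv]
  simp only [ContinuousLinearMap.toLinearMap_sub, ContinuousLinearMap.toLinearMap_smul,
    ContinuousLinearMap.coe_id, ContinuousLinearMap.coe_smulRight,
    ContinuousLinearMap.toLinearMap_innerSL_apply, map_sub, map_smul, LinearMap.trace_id,
    smul_eq_mul, LinearMap.trace_smulRight, innerₛₗ_apply_apply, inner_self_eq_norm_sq_to_K,
    ringHom_apply]
  ring

lemma sub_two_div_le_divergence_inv_one_add_norm_sq_smul_self (x : E) :
    (finrank ℝ E - 2) / (1 + ‖x‖ ^ 2) ≤ divergence (fun y : E ↦ (1 + ‖y‖ ^ 2)⁻¹ • y) x := by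
  have : (finrank ℝ E : ℝ) / (1 + ‖x‖ ^ 2) - 2 * ‖x‖ ^ 2 / (1 + ‖x‖ ^ 2) ^ 2
      = (finrank ℝ E - 2) / (1 + ‖x‖ ^ 2) + 2 / (1 + ‖x‖ ^ 2) ^ 2 := by
    field_simp
    ring
  rw [divergence_inv_one_add_norm_sq_smul_self, this]
  linarith [show 0 < 2 / (1 + ‖x‖ ^ 2) ^ 2 by positivity]

variable [MeasurableSpace E] [BorelSpace E] (μ : Measure E) [μ.IsAddHaarMeasure]

theorem integral_mul_divergence_eq_neg {f : E → ℝ} {V : E → E} (hf : ContDiff ℝ 1 f)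
    (hfs : HasCompactSupport f) (hV : ContDiff ℝ 1 V) :
    ∫ x, f x * divergence V x ∂μ = -∫ x, fderiv ℝ f x (V x) ∂μ := by
  let b := stdOrthonormalBasis ℝ E
  let g : _ → E → ℝ := fun i y ↦ ⟪b i, V y⟫_ℝ
  have hg : ∀ i, ContDiff ℝ 1 (g i) := fun i ↦ contDiff_const.inner ℝ hV
  have hg' : ∀ i x v, fderiv ℝ (g i) x v = ⟪b i, fderiv ℝ V x v⟫_ℝ := fun i x v ↦ by
    simp [g, fderiv_inner_apply ℝ (differentiableAt_const _) (hV.differentiable one_ne_zero x)]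
  have hDf : Continuous (fderiv ℝ f) := hf.continuous_fderiv one_ne_zero
  have hfg' : ∀ i, Integrable (fun x ↦ f x * fderiv ℝ (g i) x (b i)) μ := fun i ↦
    (hf.continuous.mul (((hg i).continuous_fderiv one_ne_zero).clm_apply continuous_const)
      ).integrable_of_hasCompactSupport hfs.mul_right
  have hf'g : ∀ i, Integrable (fun x ↦ fderiv ℝ f x (b i) * g i x) μ := fun i ↦
    ((hDf.clm_apply continuous_const).mul (hg i).continuous).integrable_of_hasCompactSupport
      (hfs.fderiv_apply (𝕜 := ℝ) (b i)).mul_right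
  have ibp : ∀ i, ∫ x, f x * fderiv ℝ (g i) x (b i) ∂μ = -∫ x, fderiv ℝ f x (b i) * g i x ∂μ :=
    fun i ↦ integral_mul_fderiv_eq_neg_fderiv_mul_of_integrable (hf'g i) (hfg' i)
      ((hf.continuous.mul (hg i).continuous).integrable_of_hasCompactSupport hfs.mul_right)
      (fun x _ ↦ hf.differentiable one_ne_zero x) (fun x _ ↦ (hg i).differentiable one_ne_zero x)
  calc ∫ x, f x * divergence V x ∂μ = ∫ x, ∑ i, f x * fderiv ℝ (g i) x (b i) ∂μ := by
        simp only [divergence_eq_sum_inner b, Finset.mul_sum, hg']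
    _ = ∑ i, -∫ x, fderiv ℝ f x (b i) * g i x ∂μ := by
        rw [integral_finsetSum _ fun i _ ↦ hfg' i]
        exact Finset.sum_congr rfl fun i _ ↦ ibp i
    _ = -∫ x, fderiv ℝ f x (V x) ∂μ := by
        rw [Finset.sum_neg_distrib, ← integral_finsetSum _ fun i _ ↦ hf'g i]
        congr 2 with x
        conv_rhs => rw [← b.sum_repr' (V x)]
        simp [g, mul_comm]

theorem weighted_hardy_inequality {u : E → ℝ} (hn : 2 ≤ finrank ℝ E) (hu : ContDiff ℝ 1 u)
    (hus : HasCompactSupport u) :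
    ((finrank ℝ E : ℝ) - 2) ^ 2 * ∫ x, u x ^ 2 / (1 + ‖x‖ ^ 2) ∂μ
      ≤ 4 * ∫ x, ‖fderiv ℝ u x‖ ^ 2 ∂μ := by
  set m : ℝ := finrank ℝ E - 2
  have hm : 0 ≤ m := by simp only [m, sub_nonneg]; exact_mod_cast hn
  set V : E → E := fun y ↦ (1 + ‖y‖ ^ 2)⁻¹ • y
  have hV : ContDiff ℝ 1 V :=
    ((contDiff_const.add (contDiff_norm_sq ℝ)).inv fun x ↦ by positivity).smul contDiff_id
  have hDu : Continuous (fderiv ℝ u) := hu.continuous_fderiv one_ne_zero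
  have hint : ∀ {g : E → ℝ}, Continuous g → (∀ x, u x = 0 → g x = 0) → Integrable g μ :=
    fun hg h0 ↦ hg.integrable_of_hasCompactSupport (hus.mono fun x hx hux ↦ hx (h0 x hux))
  have hA : Integrable (fun x ↦ u x ^ 2 / (1 + ‖x‖ ^ 2)) μ :=
    hint (by fun_prop (disch := intro; positivity)) fun x hx ↦ by simp [hx]
  have hB : Integrable (fun x ↦ ‖fderiv ℝ u x‖ ^ 2) μ := by
    refine Continuous.integrable_of_hasCompactSupport (by fun_prop) ?_
    exact (hus.fderiv ℝ).norm.comp_left (g := fun r : ℝ ↦ r ^ 2) (by simp)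
  have hdiv : Integrable (fun x ↦ u x ^ 2 * divergence V x) μ :=
    hint ((hu.continuous.pow 2).mul hV.continuous_divergence) fun x hx ↦ by simp [hx]
  have hR : Integrable (fun x ↦ -(m * (2 * u x * fderiv ℝ u x x / (1 + ‖x‖ ^ 2)))) μ :=
    hint (by fun_prop (disch := intro; positivity)) fun x hx ↦ by simp [hx]
  have ibp : ∫ x, u x ^ 2 * divergence V x ∂μ
      = -∫ x, 2 * u x * fderiv ℝ u x x / (1 + ‖x‖ ^ 2) ∂μ := by
    rw [integral_mul_divergence_eq_neg μ (hu.pow 2) (hus.comp_left (g := (· ^ 2)) (by simp)) hV]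
    congr 2 with x
    simp only [V, fderiv_fun_pow 2 (hu.differentiable one_ne_zero x), Nat.add_one_sub_one,
      pow_one, nsmul_eq_mul, Nat.cast_ofNat, map_smul, smul_apply, smul_eq_mul]
    ring
  have lower : m * ∫ x, u x ^ 2 / (1 + ‖x‖ ^ 2) ∂μ ≤ ∫ x, u x ^ 2 * divergence V x ∂μ := by
    rw [← integral_const_mul]
    refine integral_mono (hA.const_mul m) hdiv fun x ↦ ?_
    have hdivV := sub_two_div_le_divergence_inv_one_add_norm_sq_smul_self x
    calc m * (u x ^ 2 / (1 + ‖x‖ ^ 2)) = u x ^ 2 * (m / (1 + ‖x‖ ^ 2)) := by ring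
      _ ≤ u x ^ 2 * divergence V x := by gcongr
  have upper : m * ∫ x, u x ^ 2 * divergence V x ∂μ
      ≤ m ^ 2 / 2 * ∫ x, u x ^ 2 / (1 + ‖x‖ ^ 2) ∂μ + 2 * ∫ x, ‖fderiv ℝ u x‖ ^ 2 ∂μ := by
    rw [ibp, mul_neg, ← integral_const_mul, ← integral_neg, ← integral_const_mul,
      ← integral_const_mul, ← integral_add (hA.const_mul _) (hB.const_mul _)]
    exact integral_mono hR ((hA.const_mul _).add (hB.const_mul _)) fun x ↦
      (neg_le_abs _).trans (abs_mul_two_mul_apply_div_le m (u x) (fderiv ℝ u x) x)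
  nlinarith [mul_le_mul_of_nonneg_left lower hm]

end Hardy

/-- Hardy-type inequality: for compactly supported `C¹` functions,
`∫ u²/(1+|x|²) ≤ 4∫‖∇u‖²`; consequently the weighted `ℋ¹` norm is at most `√5` times the
seminorm `‖∇u‖_{L²}`. -/
theorem statement12 (u : E3 → ℝ) (hu : ContDiff ℝ 1 u) (hsupp : HasCompactSupport u) :
    (∫ x : E3, u x ^ 2 / (1 + ‖x‖ ^ 2)) ≤ 4 * (∫ x : E3, ‖gradient u x‖ ^ 2) ∧
    Real.sqrt ((∫ x : E3, ((ω x)⁻¹ * u x) ^ 2) + ∫ x : E3, ‖gradient u x‖ ^ 2)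
      ≤ Real.sqrt 5 * Real.sqrt (∫ x : E3, ‖gradient u x‖ ^ 2) := by
  have hgrad : ∀ x, ‖gradient u x‖ = ‖fderiv ℝ u x‖ := fun x ↦ by
    rw [← toDual_gradient, LinearIsometryEquiv.norm_map]
  have hardy : ∫ x : E3, u x ^ 2 / (1 + ‖x‖ ^ 2) ≤ 4 * ∫ x : E3, ‖gradient u x‖ ^ 2 := by
    have h := weighted_hardy_inequality volume (by simp) hu hsupp
    norm_num [finrank_euclideanSpace] at h
    simpa only [hgrad] using h
  have hweight : ∀ x : E3, ((ω x)⁻¹ * u x) ^ 2 = u x ^ 2 / (1 + ‖x‖ ^ 2) := fun x ↦ by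
    rw [mul_pow, inv_pow, ω, sq_sqrt (by positivity), inv_mul_eq_div]
  refine ⟨hardy, ?_⟩
  rw [← sqrt_mul (by norm_num)]
  simp only [hweight]
  exact sqrt_le_sqrt (by linarith)
end
end
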